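/- Let S¹, S², …, S^{4^m} be all words of length m over a 4-letter alphabet sorted by free energy FE, and let Δ = max_i (FE(S^{i+1}) − FE(S^i)) be the largest gap between consecutive free energies. Then Δ ≤ 2D where D = Γ_max − Γ_min. -/

import Mathlib

/-- The free energy of a word, `FE(X) = ∑_{i=1}^{m-1} Γ(x_i, x_{i+1})`. -/
def freeEnergy (Γ : Fin 4 → Fin 4 → ℤ) (l : List (Fin 4)) : ℤ :=
  ((l.zip l.tail).map fun p => Γ p.1 p.2).sum

/-- The finite set of free energies attained by length-`m` words over the
4-letter alphabet. -/
def energies (Γ : Fin 4 → Fin 4 → ℤ) (m : ℕ) : Finset ℤ :=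
  Finset.image (fun v : List.Vector (Fin 4) m => freeEnergy Γ v.toList)
    Finset.univ

/-!
Walk from a word `x` to a word `y` of the same length by overwriting the letters of `x` with
those of `y` one position at a time. Changing one letter changes at most two terms of the free
energy, so every step moves the energy by at most `2D`; hence the walk cannot jump over a gap of
more than `2D` between attained energies.
-/

lemma freeEnergy_cons_cons (Γ : Fin 4 → Fin 4 → ℤ) (a b : Fin 4) (l : List (Fin 4)) :
    freeEnergy Γ (a :: b :: l) = Γ a b + freeEnergy Γ (b :: l) := by
  simp [freeEnergy]

section StepBound

variable {Γ : Fin 4 → Fin 4 → ℤ} {D : ℤ}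

lemma freeEnergy_cons_sub_cons_le (hΓ : ∀ a b a' b', Γ a b - Γ a' b' ≤ D)
    (c c' : Fin 4) (s : List (Fin 4)) :
    freeEnergy Γ (c :: s) - freeEnergy Γ (c' :: s) ≤ D := by
  cases s with
  | nil => simpa [freeEnergy] using hΓ 0 0 0 0
  | cons b t =>
    rw [freeEnergy_cons_cons, freeEnergy_cons_cons]
    linarith [hΓ c b c' b]

lemma freeEnergy_append_cons_sub_le (hΓ : ∀ a b a' b', Γ a b - Γ a' b' ≤ D)
    (c c' : Fin 4) (s : List (Fin 4)) :
    ∀ p : List (Fin 4), freeEnergy Γ (p ++ c :: s) - freeEnergy Γ (p ++ c' :: s) ≤ 2 * D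
  | [] => by
    have hD : 0 ≤ D := by simpa using hΓ 0 0 0 0
    simpa only [List.nil_append] using
      (freeEnergy_cons_sub_cons_le hΓ c c' s).trans (by linarith)
  | [a] => by
    simp only [List.singleton_append, freeEnergy_cons_cons]
    linarith [freeEnergy_cons_sub_cons_le hΓ c c' s, hΓ a c a c']
  | a :: b :: p => by
    simpa only [List.cons_append, freeEnergy_cons_cons, add_sub_add_left_eq_sub]
      using freeEnergy_append_cons_sub_le hΓ c c' s (b :: p)

lemma freeEnergy_take_succ_append_drop_sub_le (hΓ : ∀ a b a' b', Γ a b - Γ a' b' ≤ D)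
    {x y : List (Fin 4)} (hxy : x.length = y.length) (j : ℕ) :
    freeEnergy Γ (y.take (j + 1) ++ x.drop (j + 1)) - freeEnergy Γ (y.take j ++ x.drop j)
      ≤ 2 * D := by
  by_cases hj : j < x.length
  · rw [List.take_add_one, List.drop_eq_getElem_cons hj, List.getElem?_eq_getElem (hxy ▸ hj)]
    simpa only [Option.toList_some, List.append_assoc, List.singleton_append]
      using freeEnergy_append_cons_sub_le hΓ y[j] x[j] (x.drop (j + 1)) (y.take j)
  · have hD : 0 ≤ D := by simpa using hΓ 0 0 0 0
    rw [List.take_of_length_le (by omega), List.take_of_length_le (by omega),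
      List.drop_of_length_le (by omega), List.drop_of_length_le (by omega)]
    simpa using hD

end StepBound

lemma mem_energies {Γ : Fin 4 → Fin 4 → ℤ} {m : ℕ} {E : ℤ} :
    E ∈ energies Γ m ↔ ∃ l : List (Fin 4), l.length = m ∧ freeEnergy Γ l = E := by
  simp only [energies, Finset.mem_image, Finset.mem_univ, true_and]
  exact ⟨fun ⟨v, hv⟩ => ⟨v.toList, v.2, hv⟩, fun ⟨l, hl, hE⟩ => ⟨⟨l, hl⟩, hE⟩⟩

lemma length_take_append_drop {α : Type*} {x y : List α} {m : ℕ} (hx : x.length = m)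
    (hy : y.length = m) (j : ℕ) : (y.take j ++ x.drop j).length = m := by
  simp only [List.length_append, List.length_take, List.length_drop, hx, hy]
  omega

theorem stmt_14_general (Γ : Fin 4 → Fin 4 → ℤ) (m : ℕ) :
    ∀ E₁ ∈ energies Γ m, ∀ E₂ ∈ energies Γ m, E₁ < E₂ →
      (∀ E ∈ energies Γ m, ¬(E₁ < E ∧ E < E₂)) →
      E₂ - E₁ ≤
        2 * ((Finset.univ.sup' Finset.univ_nonempty
            fun p : Fin 4 × Fin 4 => Γ p.1 p.2) -
          (Finset.univ.inf' Finset.univ_nonempty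
            fun p : Fin 4 × Fin 4 => Γ p.1 p.2)) := by
  intro E₁ h₁ E₂ h₂ hlt hgap
  have hΓ : ∀ a b a' b', Γ a b - Γ a' b' ≤
      (Finset.univ.sup' Finset.univ_nonempty fun p : Fin 4 × Fin 4 => Γ p.1 p.2) -
        Finset.univ.inf' Finset.univ_nonempty fun p : Fin 4 × Fin 4 => Γ p.1 p.2 :=
    fun a b a' b' => sub_le_sub
      (Finset.le_sup' (fun p : Fin 4 × Fin 4 => Γ p.1 p.2) (Finset.mem_univ (a, b)))
      (Finset.inf'_le (fun p : Fin 4 × Fin 4 => Γ p.1 p.2) (Finset.mem_univ (a', b')))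
  obtain ⟨x, hx, rfl⟩ := mem_energies.mp h₁
  obtain ⟨y, hy, rfl⟩ := mem_energies.mp h₂
  set f : ℕ → ℤ := fun j => freeEnergy Γ (y.take j ++ x.drop j)
  obtain ⟨j, hj, hj₁⟩ : ∃ j, ¬freeEnergy Γ y ≤ f j ∧ freeEnergy Γ y ≤ f (j + 1) :=
    Nat.exists_not_and_succ_of_not_zero_of_exists (by simpa [f] using hlt)
      ⟨m, by simp [f, List.take_of_length_le hy.le, List.drop_of_length_le hx.le]⟩
  have hfj : f j ≤ freeEnergy Γ x := by
    have := hgap (f j) (mem_energies.mpr ⟨_, length_take_append_drop hx hy j, rfl⟩)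
    omega
  linarith [freeEnergy_take_succ_append_drop_sub_le hΓ (hx.trans hy.symm) j]

/-- Sorting all length-`m` (`m ≥ 2`) words by free energy, the largest gap `Δ`
between consecutive energies satisfies `Δ ≤ 2D` where `D = Γ_max − Γ_min`:
any two attained energies `E₁ < E₂` with no attained energy strictly between
them satisfy `E₂ − E₁ ≤ 2D`. -/
theorem stmt_14 (Γ : Fin 4 → Fin 4 → ℤ) (m : ℕ) (hm : 2 ≤ m) :
    ∀ E₁ ∈ energies Γ m, ∀ E₂ ∈ energies Γ m, E₁ < E₂ →
      (∀ E ∈ energies Γ m, ¬(E₁ < E ∧ E < E₂)) →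
      E₂ - E₁ ≤
        2 * ((Finset.univ.sup' Finset.univ_nonempty
            fun p : Fin 4 × Fin 4 => Γ p.1 p.2) -
          (Finset.univ.inf' Finset.univ_nonempty
            fun p : Fin 4 × Fin 4 => Γ p.1 p.2)) :=
  stmt_14_general Γ m
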